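/- arXiv:2311.03715 — 8 statements merged into one kernel-verified Lean document; each statement's English description precedes it below -/
import Mathlib

section
/- Let X be a compact metric space, c ∈ X, and f1, f2 : X → X continuous with f1(x) = c for all x ∈ X and f2(c) = c; let F = {f1, f2}. If p ∈ X is a periodic point of f2 (i.e., f2^m(p) = p for some m ≥ 1), then p is a periodic point of F, i.e., the deleted orbit {F^n(p) : n ≥ 1} is finite and p ∈ F^N(p) for some N ≥ 1. -/
open TopologicalSpace

/-- `mIter f₁ f₂ n x` is the set `F^n(x)` for the multiple mapping `F = {f₁, f₂}`:
all points `f_{i₁} ∘ ⋯ ∘ f_{iₙ} (x)` with `i₁, …, iₙ ∈ {1, 2}`. -/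
def mIter {X : Type*} (f₁ f₂ : X → X) : ℕ → X → Set X
  | 0, x => {x}
  | n + 1, x => f₁ '' mIter f₁ f₂ n x ∪ f₂ '' mIter f₁ f₂ n x

lemma mIter_finite {X : Type*} (f₁ f₂ : X → X) (n : ℕ) (x : X) :
    (mIter f₁ f₂ n x).Finite := by
  induction n with
  | zero => exact Set.finite_singleton x
  | succ n ih => exact (ih.image f₁).union (ih.image f₂)

lemma mIter_nonempty {X : Type*} (f₁ f₂ : X → X) (n : ℕ) (x : X) :
    (mIter f₁ f₂ n x).Nonempty := by
  induction n with
  | zero => exact ⟨x, rfl⟩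
  | succ n ih => exact (ih.image f₁).mono Set.subset_union_left

/-- `F^n(x)` as a nonempty compact subset of `X`. -/
def mIterNC {X : Type*} [TopologicalSpace X] (f₁ f₂ : X → X) (n : ℕ) (x : X) :
    NonemptyCompacts X :=
  ⟨⟨mIter f₁ f₂ n x, (mIter_finite f₁ f₂ n x).isCompact⟩, mIter_nonempty f₁ f₂ n x⟩

/-- The deleted orbit of `x` under `F = {f₁, f₂}`: the family `{F^n(x) : n ≥ 1}`. -/
def deletedOrbit {X : Type*} (f₁ f₂ : X → X) (x : X) : Set (Set X) :=
  {S | ∃ n, 1 ≤ n ∧ S = mIter f₁ f₂ n x}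

/-- `x` is a periodic point of `F = {f₁, f₂}`: its deleted orbit is finite and
`x ∈ F^m(x)` for some `m ≥ 1`. -/
def MPeriodicPt {X : Type*} (f₁ f₂ : X → X) (x : X) : Prop :=
  (deletedOrbit f₁ f₂ x).Finite ∧ ∃ m, 1 ≤ m ∧ x ∈ mIter f₁ f₂ m x

/-- `Ran(F) = {F^n(x) : n ≥ 1, x ∈ X}` as a set of nonempty compact subsets of `X`. -/
def mRan {X : Type*} [TopologicalSpace X] (f₁ f₂ : X → X) : Set (NonemptyCompacts X) :=
  {K | ∃ n, 1 ≤ n ∧ ∃ x, K = mIterNC f₁ f₂ n x}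

/-- Transitivity of the multiple mapping `F = {f₁, f₂}`: for every nonempty open
`U ⊆ X` and every nonempty relatively open subset `𝒰` of `Ran(F)` (in the Hausdorff
metric on nonempty compact subsets), there are `n ≥ 1` and `u ∈ U` with `F^n(u) ∈ 𝒰`. -/
def MTransitive {X : Type*} [MetricSpace X] (f₁ f₂ : X → X) : Prop :=
  ∀ U : Set X, IsOpen U → U.Nonempty →
    ∀ 𝒰 : Set (NonemptyCompacts X), 𝒰.Nonempty →
      (∃ V : Set (NonemptyCompacts X), IsOpen V ∧ 𝒰 = V ∩ mRan f₁ f₂) →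
      ∃ n, 1 ≤ n ∧ ∃ u ∈ U, mIterNC f₁ f₂ n u ∈ 𝒰

/-- Hausdorff metric sensitivity of the multiple mapping `F = {f₁, f₂}`;
`dist` on `NonemptyCompacts X` is the Hausdorff metric `d_H`. -/
def MSensitive {X : Type*} [MetricSpace X] (f₁ f₂ : X → X) : Prop :=
  ∃ δ > (0 : ℝ), ∀ U : Set X, IsOpen U → U.Nonempty →
    ∃ x ∈ U, ∃ y ∈ U, ∃ n, 1 ≤ n ∧ δ < dist (mIterNC f₁ f₂ n x) (mIterNC f₁ f₂ n y)

/-- Topological transitivity of a single map. -/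
def MapTransitive {X : Type*} [TopologicalSpace X] (f : X → X) : Prop :=
  ∀ U V : Set X, IsOpen U → U.Nonempty → IsOpen V → V.Nonempty →
    ∃ n, 1 ≤ n ∧ (f^[n] '' U ∩ V).Nonempty

/-- Sensitivity of a single map. -/
def MapSensitive {X : Type*} [MetricSpace X] (f : X → X) : Prop :=
  ∃ δ > (0 : ℝ), ∀ U : Set X, IsOpen U → U.Nonempty →
    ∃ x ∈ U, ∃ y ∈ U, ∃ n, 1 ≤ n ∧ δ < dist (f^[n] x) (f^[n] y)

/-! Since `f₁` collapses everything to the fixed point `c` of `f₂`, every `F^n(x)` with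
`n ≥ 1` is the pair `{c, f₂^[n] x}`. So the deleted orbit of a periodic point of `f₂`
takes only finitely many values, and its period `m` gives `p ∈ F^m(p)`. -/

theorem Function.IsPeriodicPt.finite_range_iterate {α : Type*} {f : α → α} {m : ℕ} {x : α}
    (hx : Function.IsPeriodicPt f m x) (hm : 0 < m) :
    (Set.range fun n => f^[n] x).Finite := by
  refine ((Set.finite_Iio m).image fun k => f^[k] x).subset ?_
  rintro _ ⟨n, rfl⟩
  exact ⟨n % m, Nat.mod_lt n hm, hx.iterate_mod_apply n⟩

section ConstantFirstMap

variable {X : Type*} {f₁ f₂ : X → X} {c : X}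

theorem deletedOrbit_eq_range (x : X) :
    deletedOrbit f₁ f₂ x = Set.range fun n => mIter f₁ f₂ (n + 1) x := by
  ext S
  constructor
  · rintro ⟨n, hn, rfl⟩
    obtain ⟨k, rfl⟩ := Nat.exists_eq_add_of_le' hn
    exact ⟨k, rfl⟩
  · rintro ⟨n, rfl⟩
    exact ⟨n + 1, n.succ_pos, rfl⟩

theorem mIter_succ_of_const (hconst : ∀ x, f₁ x = c) (hfix : f₂ c = c) (x : X) (n : ℕ) :
    mIter f₁ f₂ (n + 1) x = {c, f₂^[n + 1] x} := by
  induction n with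
  | zero =>
    change f₁ '' {x} ∪ f₂ '' {x} = _
    rw [Set.image_singleton, Set.image_singleton, hconst, Set.singleton_union]
    rfl
  | succ n ih =>
    change f₁ '' mIter f₁ f₂ (n + 1) x ∪ f₂ '' mIter f₁ f₂ (n + 1) x = _
    rw [ih, Set.image_pair, Set.image_pair, hconst, hconst, Set.pair_eq_singleton, hfix,
      Set.singleton_union, Set.insert_eq_of_mem (Set.mem_insert c _),
      ← Function.iterate_succ_apply' f₂]

end ConstantFirstMap

theorem stmt2_general {X : Type*}
    (f₁ f₂ : X → X) (c : X)
    (hconst : ∀ x, f₁ x = c) (hfix : f₂ c = c) (p : X)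
    (hp : ∃ m, 1 ≤ m ∧ f₂^[m] p = p) :
    MPeriodicPt f₁ f₂ p := by
  obtain ⟨m, hm, hperiodic⟩ := hp
  have hfinite := Function.IsPeriodicPt.finite_range_iterate hperiodic (Nat.lt_of_succ_le hm)
  have hpair : ∀ n, mIter f₁ f₂ (n + 1) p = {c, f₂^[n + 1] p} :=
    mIter_succ_of_const hconst hfix p
  refine ⟨?_, m, hm, ?_⟩
  · refine (hfinite.image fun y => ({c, y} : Set X)).subset ?_
    rw [deletedOrbit_eq_range]
    rintro _ ⟨n, rfl⟩
    exact ⟨_, ⟨n + 1, rfl⟩, (hpair n).symm⟩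
  · obtain ⟨k, rfl⟩ := Nat.exists_eq_add_of_le' hm
    rw [hpair, hperiodic]
    exact Or.inr rfl

/-- if `f₁ ≡ c` is constant, `f₂ c = c` and `p` is a periodic point of `f₂`,
then `p` is a periodic point of `F = {f₁, f₂}`. -/
theorem stmt2 {X : Type*} [MetricSpace X] [CompactSpace X]
    (f₁ f₂ : X → X) (hf₁ : Continuous f₁) (hf₂ : Continuous f₂) (c : X)
    (hconst : ∀ x, f₁ x = c) (hfix : f₂ c = c) (p : X)
    (hp : ∃ m, 1 ≤ m ∧ f₂^[m] p = p) :
    MPeriodicPt f₁ f₂ p :=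
  stmt2_general f₁ f₂ c hconst hfix p hp
end

section
/- Let X be a compact metric space, c ∈ X, and f1, f2 : X → X continuous with f1(x) = c for all x ∈ X and f2(c) = c; let F = {f1, f2}. If f2 is topologically transitive (for all nonempty open U, V ⊆ X there exists n ≥ 1 with f2^n(U) ∩ V ≠ ∅), then F is transitive: for every nonempty open set U ⊆ X and every nonempty relatively open subset 𝒰 of Ran(F) := {F^n(x) : n ≥ 1, x ∈ X}, regarded as a subspace of the space of nonempty compact subsets of X with the Hausdorff metric, there exist n ≥ 1 and u ∈ U with F^n(u) ∈ 𝒰. -/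
open TopologicalSpace

/-!
With `f₁ ≡ c` and `f₂ c = c`, every `F^n(x)` with `n ≥ 1` is the pair `{c, f₂^[n] x}`, and
`d_H({c, a}, {c, b}) ≤ d(a, b)`. So `F^n(u)` lies within `ε` of a given `F^{n₀}(x₀)` in `Ran(F)`
as soon as `f₂^[n] u` lies in the `ε`-ball around `f₂^[n₀] x₀`, and transitivity of `f₂`
provides such `n ≥ 1` and `u ∈ U`.
-/

open Metric

lemma Metric.hausdorffDist_pair_pair_le {X : Type*} [MetricSpace X] (c a b : X) :
    hausdorffDist ({c, a} : Set X) {c, b} ≤ dist a b := by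
  have hEDist : hausdorffEDist ({c, a} : Set X) {c, b} ≤ edist a b := by
    have h := hausdorffEDist_union_le (s₁ := {c}) (s₂ := {a}) (t₁ := {c}) (t₂ := {b})
    rwa [hausdorffEDist_self, hausdorffEDist_singleton, zero_max,
      ← Set.insert_eq, ← Set.insert_eq] at h
  exact ENNReal.toReal_le_of_le_ofReal dist_nonneg (hEDist.trans_eq (edist_dist a b))

section ConstantFirstMap

variable {X : Type*} {f₁ f₂ : X → X} {c : X}

lemma mIter_eq_pair (hconst : ∀ x, f₁ x = c) (hfix : f₂ c = c) {n : ℕ} (hn : 1 ≤ n) (x : X) :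
    mIter f₁ f₂ n x = {c, f₂^[n] x} := by
  induction n, hn using Nat.le_induction with
  | base => simp [mIter, hconst, Set.pair_comm]
  | succ n _ ih =>
    simp only [mIter, ih, Set.image_pair, hconst, hfix, Function.iterate_succ_apply',
      Set.pair_eq_singleton, Set.singleton_union, Set.insert_idem]

lemma dist_mIterNC_le [MetricSpace X] (hconst : ∀ x, f₁ x = c) (hfix : f₂ c = c)
    {n m : ℕ} (hn : 1 ≤ n) (hm : 1 ≤ m) (x y : X) :
    dist (mIterNC f₁ f₂ n x) (mIterNC f₁ f₂ m y) ≤ dist (f₂^[n] x) (f₂^[m] y) := by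
  rw [NonemptyCompacts.dist_eq]
  change hausdorffDist (mIter f₁ f₂ n x) (mIter f₁ f₂ m y) ≤ _
  rw [mIter_eq_pair hconst hfix hn, mIter_eq_pair hconst hfix hm]
  exact hausdorffDist_pair_pair_le c _ _

end ConstantFirstMap

theorem stmt3_general {X : Type*} [MetricSpace X]
    (f₁ f₂ : X → X) (c : X)
    (hconst : ∀ x, f₁ x = c) (hfix : f₂ c = c)
    (htrans : MapTransitive f₂) :
    MTransitive f₁ f₂ := by
  rintro U hU hUne 𝒰 h𝒰ne ⟨V, hV, rfl⟩
  obtain ⟨_, hKV, n₀, hn₀, x₀, rfl⟩ := h𝒰ne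
  obtain ⟨ε, hε, hballV⟩ := isOpen_iff.mp hV _ hKV
  obtain ⟨n, hn, _, ⟨u, hu, rfl⟩, hclose⟩ :=
    htrans U (ball (f₂^[n₀] x₀) ε) hU hUne isOpen_ball ⟨_, mem_ball_self hε⟩
  refine ⟨n, hn, u, hu, hballV ?_, n, hn, u, rfl⟩
  exact (dist_mIterNC_le hconst hfix hn hn₀ u x₀).trans_lt hclose

/-- if `f₁ ≡ c` is constant, `f₂ c = c` and `f₂` is topologically
transitive, then the multiple mapping `F = {f₁, f₂}` is transitive. -/
theorem stmt3 {X : Type*} [MetricSpace X] [CompactSpace X]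
    (f₁ f₂ : X → X) (hf₁ : Continuous f₁) (hf₂ : Continuous f₂) (c : X)
    (hconst : ∀ x, f₁ x = c) (hfix : f₂ c = c)
    (htrans : MapTransitive f₂) :
    MTransitive f₁ f₂ :=
  stmt3_general f₁ f₂ c hconst hfix htrans
end

section
/- Let X be a compact metric space, f1, f2 : X → X continuous, and F = {f1, f2}. Suppose (i) F is transitive, (ii) the set P(F) of periodic points of F is dense in X, and (iii) there exist periodic points p1, p2 of F whose deleted-orbit unions ⋃_{n≥1} F^n(p1) and ⋃_{n≥1} F^n(p2) are disjoint. Then F is Hausdorff metric sensitive: there exists δ > 0 such that every nonempty open set U ⊆ X contains points x, y with d_H(F^n(x), F^n(y)) > δ for some n ≥ 1. -/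
open TopologicalSpace

/-!
Two periodic points with disjoint, finite orbit unions have disjoint `δ`-thickenings of these
unions, so every `x` has a `δ/2`-ball missing the `δ/2`-thickening of one of the two orbit unions,
say that of `q`. Pick a periodic point `p ∈ F^m(p)` near `x`. Points whose first `m` images stay
near the orbit of `q` form an open neighbourhood of it, so transitivity yields `u ∈ U` with
`F^N(u)` in the `δ/2`-thickening for some multiple `N` of `m`; as `p ∈ F^N(p)`, this forces
`d_H(F^N(p), F^N(u)) ≥ δ/4`.
-/

open Metric

section MultipleMapping

variable {X : Type*} {f₁ f₂ : X → X}

def mOrbit (f₁ f₂ : X → X) (p : X) : Set X :=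
  ⋃ n ≥ 1, mIter f₁ f₂ n p

theorem mIter_add (k n : ℕ) (x : X) :
    mIter f₁ f₂ (k + n) x = ⋃ z ∈ mIter f₁ f₂ n x, mIter f₁ f₂ k z := by
  induction k with
  | zero => simp [mIter]
  | succ k ih =>
    rw [Nat.add_right_comm, mIter, ih]
    simp only [mIter, Set.image_iUnion₂, Set.iUnion_union_distrib]

theorem mIter_subset_mIter_add {n : ℕ} {x z : X} (hz : z ∈ mIter f₁ f₂ n x) (k : ℕ) :
    mIter f₁ f₂ k z ⊆ mIter f₁ f₂ (k + n) x := by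
  rw [mIter_add]
  exact Set.subset_biUnion_of_mem (u := fun z => mIter f₁ f₂ k z) hz

theorem mem_mIter_mul {m : ℕ} {p : X} (hp : p ∈ mIter f₁ f₂ m p) (j : ℕ) :
    p ∈ mIter f₁ f₂ (m * j) p := by
  induction j with
  | zero => exact Set.mem_singleton p
  | succ j ih =>
    rw [Nat.mul_succ, Nat.add_comm]
    exact mIter_subset_mIter_add ih m hp

theorem mIter_subset_mOrbit {n : ℕ} (hn : 1 ≤ n) (p : X) :
    mIter f₁ f₂ n p ⊆ mOrbit f₁ f₂ p :=
  Set.subset_biUnion_of_mem (u := fun n => mIter f₁ f₂ n p) hn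

theorem mIter_subset_mOrbit_of_mem {p z : X} (hz : z ∈ mOrbit f₁ f₂ p) (k : ℕ) :
    mIter f₁ f₂ k z ⊆ mOrbit f₁ f₂ p := by
  obtain ⟨n, hn, hzn⟩ := Set.mem_iUnion₂.1 hz
  exact (mIter_subset_mIter_add hzn k).trans (mIter_subset_mOrbit (by omega) p)

theorem finite_mOrbit {p : X} (h : (deletedOrbit f₁ f₂ p).Finite) :
    (mOrbit f₁ f₂ p).Finite := by
  refine (h.sUnion ?_).subset (Set.iUnion₂_subset fun n hn => ?_)
  · rintro _ ⟨n, -, rfl⟩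
    exact mIter_finite f₁ f₂ n p
  · exact Set.subset_sUnion_of_mem ⟨n, hn, rfl⟩

theorem isOpen_setOf_mIter_subset [TopologicalSpace X] (hf₁ : Continuous f₁)
    (hf₂ : Continuous f₂) (k : ℕ) {V : Set X} (hV : IsOpen V) :
    IsOpen {z | mIter f₁ f₂ k z ⊆ V} := by
  induction k generalizing V with
  | zero => simpa [mIter] using hV
  | succ k ih =>
    simpa only [mIter, Set.union_subset_iff, Set.image_subset_iff, ← Set.subset_inter_iff]
      using ih ((hV.preimage hf₁).inter (hV.preimage hf₂))

theorem MTransitive.exists_mIter_subset [MetricSpace X] (htrans : MTransitive f₁ f₂)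
    (hf₁ : Continuous f₁) (hf₂ : Continuous f₂) {U : Set X} (hU : IsOpen U)
    (hUne : U.Nonempty) {q : X} {V : Set X} (hV : IsOpen V) (hqV : mOrbit f₁ f₂ q ⊆ V)
    {m : ℕ} (hm : 0 < m) :
    ∃ u ∈ U, ∃ N, 1 ≤ N ∧ m ∣ N ∧ mIter f₁ f₂ N u ⊆ V := by
  set W := ⋂ k ∈ Set.Iic m, {z | mIter f₁ f₂ k z ⊆ V}
  have hW : IsOpen W :=
    (Set.finite_Iic m).isOpen_biInter fun k _ => isOpen_setOf_mIter_subset hf₁ hf₂ k hV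
  have hqW : mOrbit f₁ f₂ q ⊆ W := fun z hz =>
    Set.mem_iInter₂.2 fun k _ => (mIter_subset_mOrbit_of_mem hz k).trans hqV
  obtain ⟨n, hn, u, hu, hnW, -⟩ := htrans U hU hUne
    ({K | (K : Set X) ⊆ W} ∩ mRan f₁ f₂)
    ⟨mIterNC f₁ f₂ 1 q, (mIter_subset_mOrbit le_rfl q).trans hqW, 1, le_rfl, q, rfl⟩
    ⟨_, NonemptyCompacts.isOpen_subsets_of_isOpen hW, rfl⟩
  -- the first multiple of `m` after `n` lies in `(n, n + m]`
  have hlt := Nat.lt_mul_div_succ n hm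
  have hle := Nat.mul_div_le n m
  refine ⟨u, hu, m * (n / m + 1), by omega, dvd_mul_right _ _, ?_⟩
  rw [show m * (n / m + 1) = (m * (n / m + 1) - n) + n by omega, mIter_add]
  exact Set.iUnion₂_subset fun z hz =>
    Set.mem_iInter₂.1 (hnW hz) _ (Set.mem_Iic.2 (by rw [Nat.mul_succ] at hlt ⊢; omega))

end MultipleMapping

theorem Metric.disjoint_ball_thickening_or {X : Type*} [PseudoMetricSpace X] {A B : Set X}
    {δ : ℝ} (h : Disjoint (thickening δ A) (thickening δ B)) (x : X) :
    Disjoint (ball x (δ / 2)) (thickening (δ / 2) A) ∨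
      Disjoint (ball x (δ / 2)) (thickening (δ / 2) B) := by
  have key : ∀ C : Set X, ¬Disjoint (ball x (δ / 2)) (thickening (δ / 2) C) →
      x ∈ thickening δ C := fun C hC => by
    obtain ⟨y, hyx, hyC⟩ := Set.not_disjoint_iff.1 hC
    have := thickening_thickening_subset (δ / 2) (δ / 2) C
      (mem_thickening_iff.2 ⟨y, hyC, mem_ball_comm.1 hyx⟩)
    rwa [add_halves] at this
  by_contra! hAB
  exact h.ne_of_mem (key A hAB.1) (key B hAB.2) rfl

theorem TopologicalSpace.NonemptyCompacts.le_dist_of_disjoint_ball {X : Type*} [MetricSpace X]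
    {K L : NonemptyCompacts X} {x : X} {r : ℝ} (hx : x ∈ K)
    (h : Disjoint (ball x r) (L : Set X)) : r ≤ dist K L := by
  rw [NonemptyCompacts.dist_eq]
  refine le_trans ?_ (infDist_le_hausdorffDist_of_mem hx
    (hausdorffEDist_ne_top_of_nonempty_of_bounded K.nonempty L.nonempty
      K.isCompact.isBounded L.isCompact.isBounded))
  exact (le_infDist L.nonempty).2 fun y hy => not_lt.1 fun hxy =>
    h.ne_of_mem (mem_ball_comm.1 hxy) hy rfl

theorem stmt5_general {X : Type*} [MetricSpace X]
    (f₁ f₂ : X → X) (hf₁ : Continuous f₁) (hf₂ : Continuous f₂)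
    (htrans : MTransitive f₁ f₂)
    (hdense : Dense {x | MPeriodicPt f₁ f₂ x})
    (p₁ p₂ : X) (hp₁ : MPeriodicPt f₁ f₂ p₁) (hp₂ : MPeriodicPt f₁ f₂ p₂)
    (hdisj : Disjoint (⋃ n ≥ 1, mIter f₁ f₂ n p₁) (⋃ n ≥ 1, mIter f₁ f₂ n p₂)) :
    MSensitive f₁ f₂ := by
  obtain ⟨δ, hδ, hsep⟩ := Disjoint.exists_thickenings (s := mOrbit f₁ f₂ p₁) hdisj
    (finite_mOrbit hp₁.1).isCompact (finite_mOrbit hp₂.1).isClosed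
  refine ⟨δ / 8, by positivity, fun U hU ⟨x, hx⟩ => ?_⟩
  obtain ⟨q, hq⟩ : ∃ q, Disjoint (ball x (δ / 2)) (thickening (δ / 2) (mOrbit f₁ f₂ q)) :=
    (disjoint_ball_thickening_or hsep x).elim (⟨p₁, ·⟩) (⟨p₂, ·⟩)
  obtain ⟨p, ⟨-, m, hm, hpm⟩, hpU, hpx⟩ :=
    hdense.exists_mem_open (hU.inter isOpen_ball) ⟨x, hx, mem_ball_self (by positivity : 0 < δ / 4)⟩
  obtain ⟨u, huU, _, hN, ⟨j, rfl⟩, huq⟩ := htrans.exists_mIter_subset hf₁ hf₂ hU ⟨x, hx⟩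
    isOpen_thickening (self_subset_thickening (half_pos hδ) _) hm
  have hball : ball p (δ / 4) ⊆ ball x (δ / 2) :=
    ball_subset_ball' (by linarith [mem_ball.1 hpx])
  refine ⟨p, hpU, u, huU, m * j, hN, ?_⟩
  calc δ / 8 < δ / 4 := by linarith
    _ ≤ _ := NonemptyCompacts.le_dist_of_disjoint_ball (x := p) (mem_mIter_mul hpm j)
      (hq.mono hball huq)

/-- if `F = {f₁, f₂}` is transitive, its periodic points are dense, and
there are two periodic points whose deleted-orbit unions are disjoint, then `F` is
Hausdorff metric sensitive. -/
theorem stmt5 {X : Type*} [MetricSpace X] [CompactSpace X]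
    (f₁ f₂ : X → X) (hf₁ : Continuous f₁) (hf₂ : Continuous f₂)
    (htrans : MTransitive f₁ f₂)
    (hdense : Dense {x | MPeriodicPt f₁ f₂ x})
    (p₁ p₂ : X) (hp₁ : MPeriodicPt f₁ f₂ p₁) (hp₂ : MPeriodicPt f₁ f₂ p₂)
    (hdisj : Disjoint (⋃ n ≥ 1, mIter f₁ f₂ n p₁) (⋃ n ≥ 1, mIter f₁ f₂ n p₂)) :
    MSensitive f₁ f₂ :=
  stmt5_general f₁ f₂ hf₁ hf₂ htrans hdense p₁ p₂ hp₁ hp₂ hdisj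
end

section
/- Let X be a compact metric space, c ∈ X, and f1, f2 : X → X continuous with f1(x) = c for all x ∈ X and f2(c) = c; let F = {f1, f2}. If f2 is Devaney chaotic (transitive, with dense periodic points, and sensitive), then F is Devaney chaotic: F is transitive, the set P(F) of periodic points of F is dense in X, and F is Hausdorff metric sensitive. -/
open TopologicalSpace

/-!
Since `f₁` collapses everything to the fixed point `c` of `f₂`, an induction gives
`F^n(x) = {c, f₂^[n] x}` for every `n ≥ 1`. For two-point sets sharing the point `c`,
`d_H({c, a}, {c, b}) ≤ d(a, b) ≤ 2 d_H({c, a}, {c, b})`, so transitivity and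
sensitivity pass from `f₂` to `F` (the latter with half the constant), and an
`f₂`-periodic point `x` of period `m` is `F`-periodic because `F^n(x) = F^(n mod m)(x)`.
-/

open Metric

section HausdorffPair

variable {X : Type*} [MetricSpace X]

lemma exists_dist_le_hausdorffDist_of_mem {s t : Set X} {x : X} (hx : x ∈ s)
    (hs : s.Finite) (ht : t.Finite) (htne : t.Nonempty) :
    ∃ y ∈ t, dist x y ≤ hausdorffDist s t := by
  obtain ⟨y, hy, hxy⟩ := ht.isCompact.exists_infDist_eq_dist htne x
  refine ⟨y, hy, hxy ▸ infDist_le_hausdorffDist_of_mem hx ?_⟩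
  exact hausdorffEDist_ne_top_of_nonempty_of_bounded ⟨x, hx⟩ htne hs.isBounded ht.isBounded

lemma hausdorffDist_pair_le_dist (c a b : X) :
    hausdorffDist ({c, a} : Set X) {c, b} ≤ dist a b := by
  refine hausdorffDist_le_of_mem_dist dist_nonneg ?_ ?_
  · rintro x (rfl | rfl)
    · exact ⟨x, by simp, by simp⟩
    · exact ⟨b, by simp, le_rfl⟩
  · rintro x (rfl | rfl)
    · exact ⟨x, by simp, by simp⟩
    · exact ⟨a, by simp, (dist_comm _ _).le⟩

lemma dist_le_two_mul_hausdorffDist_pair (c a b : X) :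
    dist a b ≤ 2 * hausdorffDist ({c, a} : Set X) {c, b} := by
  set h := hausdorffDist ({c, a} : Set X) {c, b}
  have hh : 0 ≤ h := hausdorffDist_nonneg
  obtain ⟨w, rfl | rfl, haw⟩ := exists_dist_le_hausdorffDist_of_mem (x := a)
    (s := {c, a}) (t := {c, b}) (by simp) (Set.toFinite _) (Set.toFinite _) (by simp)
  · obtain ⟨w', rfl | rfl, hbw'⟩ := exists_dist_le_hausdorffDist_of_mem (x := b)
      (s := {w, b}) (t := {w, a}) (by simp) (Set.toFinite _) (Set.toFinite _) (by simp)
    · rw [hausdorffDist_comm] at hbw'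
      linarith [dist_triangle_right a b w']
    · rw [hausdorffDist_comm, dist_comm] at hbw'
      linarith
  · linarith

end HausdorffPair

section ConstantAndFixedPoint

variable {X : Type*} {f₁ f₂ : X → X} {c : X}

lemma mPeriodicPt_of_isPeriodicPt (hconst : ∀ x, f₁ x = c) (hfix : f₂ c = c) {m : ℕ}
    (hm : 1 ≤ m) {x : X} (hx : Function.IsPeriodicPt f₂ m x) : MPeriodicPt f₁ f₂ x := by
  refine ⟨?_, m, hm, by simp [mIter_eq_pair hconst hfix hm, hx.eq]⟩
  refine ((Set.finite_Iio m).image fun r => ({c, f₂^[r] x} : Set X)).subset ?_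
  rintro S ⟨n, hn, rfl⟩
  refine ⟨n % m, Nat.mod_lt _ hm, ?_⟩
  dsimp only
  rw [hx.iterate_mod_apply, mIter_eq_pair hconst hfix hn]

variable [MetricSpace X]

lemma dist_mIterNC (hconst : ∀ x, f₁ x = c) (hfix : f₂ c = c) {n m : ℕ} (hn : 1 ≤ n)
    (hm : 1 ≤ m) (x y : X) :
    dist (mIterNC f₁ f₂ n x) (mIterNC f₁ f₂ m y) =
      hausdorffDist ({c, f₂^[n] x} : Set X) {c, f₂^[m] y} := by
  rw [NonemptyCompacts.dist_eq]
  exact congr_arg₂ hausdorffDist (mIter_eq_pair hconst hfix hn x) (mIter_eq_pair hconst hfix hm y)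

lemma mTransitive_of_mapTransitive (hconst : ∀ x, f₁ x = c) (hfix : f₂ c = c)
    (htrans : MapTransitive f₂) : MTransitive f₁ f₂ := by
  rintro U hU hUne _ h𝒰 ⟨V, hV, rfl⟩
  obtain ⟨K, hKV, n, hn, x, rfl⟩ := h𝒰
  obtain ⟨ε, hε, hball⟩ := isOpen_iff.1 hV _ hKV
  obtain ⟨m, hm, _, ⟨u, hu, rfl⟩, hclose⟩ :=
    htrans U (ball (f₂^[n] x) ε) hU hUne isOpen_ball ⟨_, mem_ball_self hε⟩
  refine ⟨m, hm, u, hu, hball ?_, m, hm, u, rfl⟩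
  rw [mem_ball, dist_mIterNC hconst hfix hm hn]
  exact (hausdorffDist_pair_le_dist c _ _).trans_lt hclose

lemma mSensitive_of_mapSensitive (hconst : ∀ x, f₁ x = c) (hfix : f₂ c = c)
    (hsens : MapSensitive f₂) : MSensitive f₁ f₂ := by
  obtain ⟨δ, hδ, hs⟩ := hsens
  refine ⟨δ / 2, half_pos hδ, fun U hU hUne => ?_⟩
  obtain ⟨x, hx, y, hy, n, hn, hfar⟩ := hs U hU hUne
  refine ⟨x, hx, y, hy, n, hn, ?_⟩
  rw [dist_mIterNC hconst hfix hn hn]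
  linarith [dist_le_two_mul_hausdorffDist_pair c (f₂^[n] x) (f₂^[n] y)]

end ConstantAndFixedPoint

theorem stmt6_general {X : Type*} [MetricSpace X]
    (f₁ f₂ : X → X) (c : X)
    (hconst : ∀ x, f₁ x = c) (hfix : f₂ c = c)
    (htrans : MapTransitive f₂)
    (hdense : Dense {x | ∃ n, 1 ≤ n ∧ f₂^[n] x = x})
    (hsens : MapSensitive f₂) :
    MTransitive f₁ f₂ ∧ Dense {x | MPeriodicPt f₁ f₂ x} ∧ MSensitive f₁ f₂ :=
  ⟨mTransitive_of_mapTransitive hconst hfix htrans,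
    hdense.mono <| by
      rintro x ⟨m, hm, hx⟩
      exact mPeriodicPt_of_isPeriodicPt hconst hfix hm hx,
    mSensitive_of_mapSensitive hconst hfix hsens⟩

/-- if `f₁ ≡ c` is constant, `f₂ c = c` and `f₂` is Devaney chaotic
(transitive, dense periodic points, sensitive), then `F = {f₁, f₂}` is Devaney
chaotic: transitive, with `P(F)` dense in `X`, and Hausdorff metric sensitive. -/
theorem stmt6 {X : Type*} [MetricSpace X] [CompactSpace X]
    (f₁ f₂ : X → X) (hf₁ : Continuous f₁) (hf₂ : Continuous f₂) (c : X)
    (hconst : ∀ x, f₁ x = c) (hfix : f₂ c = c)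
    (htrans : MapTransitive f₂)
    (hdense : Dense {x | ∃ n, 1 ≤ n ∧ f₂^[n] x = x})
    (hsens : MapSensitive f₂) :
    MTransitive f₁ f₂ ∧ Dense {x | MPeriodicPt f₁ f₂ x} ∧ MSensitive f₁ f₂ :=
  stmt6_general f₁ f₂ c hconst hfix htrans hdense hsens
end

section
/- On X = [0,1], let f1 be the tent map (f1(x) = 2x for 0 ≤ x ≤ 1/2 and f1(x) = 2 − 2x for 1/2 < x ≤ 1) and let f2(x) = 1 − 2x for 0 ≤ x ≤ 1/2 and f2(x) = 2x − 1 for 1/2 < x ≤ 1 (so f2 = 1 − f1). Then for every x ∈ [0,1] and every n ≥ 1, F^n(x) = {f1^n(x), f2^n(x)} and f1^n(x) + f2^n(x) = 1, where F = {f1, f2}. -/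
/-!
With `σ x = 1 - x`, the maps satisfy `f₁ ∘ σ = f₁` and `f₂ = σ ∘ f₁`. Hence, once a
level `F^n(x)` is a pair `{a, σ a}`, the next one is `{f₁ a, f₁ (σ a), σ (f₁ a), σ (f₁ (σ a))}
= {f₁ a, σ (f₁ a)}`, and the same identities give `f₂^n = σ ∘ f₁^n` for `n ≥ 1`.
-/

open TopologicalSpace

/-- The unit interval `[0,1]` with the Euclidean metric. -/
abbrev UI : Type := Set.Icc (0 : ℝ) 1

/-- The tent map on `[0,1]`: `2x` for `x ≤ 1/2`, `2 - 2x` for `x > 1/2`. -/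
noncomputable def tent (x : UI) : UI :=
  ⟨if (x : ℝ) ≤ 1 / 2 then 2 * x else 2 - 2 * x, by
    have h0 := x.2.1; have h1 := x.2.2
    split_ifs with h <;> exact ⟨by nlinarith, by nlinarith⟩⟩

/-- The map `x ↦ 1 - tent x` on `[0,1]`: `1 - 2x` for `x ≤ 1/2`, `2x - 1` for `x > 1/2`. -/
noncomputable def tentc (x : UI) : UI :=
  ⟨if (x : ℝ) ≤ 1 / 2 then 1 - 2 * x else 2 * x - 1, by
    have h0 := x.2.1; have h1 := x.2.2
    split_ifs with h <;> exact ⟨by nlinarith, by nlinarith⟩⟩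

/-- The map `x ↦ min (2x) 1` on `[0,1]`. -/
noncomputable def mmap₁ (x : UI) : UI :=
  ⟨min (2 * x) 1, le_min (by have := x.2.1; linarith) zero_le_one, min_le_right _ _⟩

/-- The map `x ↦ min (2 - 2x) 1` on `[0,1]`. -/
noncomputable def mmap₂ (x : UI) : UI :=
  ⟨min (2 - 2 * x) 1, le_min (by have := x.2.2; linarith) zero_le_one, min_le_right _ _⟩

section Symmetric

variable {X : Type*} {f₁ f₂ σ : X → X}

theorem iterate_succ_apply_eq_of_invariant (hσ : ∀ x, f₁ (σ x) = f₁ x)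
    (hf₂ : ∀ x, f₂ x = σ (f₁ x)) (n : ℕ) (x : X) :
    f₂^[n + 1] x = σ (f₁^[n + 1] x) := by
  induction n with
  | zero => exact hf₂ x
  | succ n ih =>
    rw [Function.iterate_succ_apply', ih, hf₂, hσ, ← Function.iterate_succ_apply' f₁]

theorem mIter_succ_eq_pair (hσ : ∀ x, f₁ (σ x) = f₁ x) (hf₂ : ∀ x, f₂ x = σ (f₁ x))
    (n : ℕ) (x : X) :
    mIter f₁ f₂ (n + 1) x = {f₁^[n + 1] x, σ (f₁^[n + 1] x)} := by
  induction n with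
  | zero => simp [mIter, hf₂, Set.pair_comm]
  | succ n ih =>
    rw [mIter, ih, Set.image_pair, Set.image_pair, hσ, hf₂, hf₂, hσ, Set.pair_eq_singleton,
      Set.pair_eq_singleton, ← Set.insert_eq, Function.iterate_succ_apply' f₁ (n + 1)]

end Symmetric

theorem coe_tent (x : UI) : (tent x : ℝ) = 1 - |2 * (x : ℝ) - 1| := by
  unfold tent
  split_ifs with h
  · rw [abs_of_nonpos (by linarith)]; ring
  · rw [abs_of_pos (by linarith)]; ring

theorem coe_tentc (x : UI) : (tentc x : ℝ) = |2 * (x : ℝ) - 1| := by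
  unfold tentc
  split_ifs with h
  · rw [abs_of_nonpos (by linarith)]; ring
  · rw [abs_of_pos (by linarith)]

theorem tent_symm (x : UI) : tent (unitInterval.symm x) = tent x := by
  rw [Subtype.ext_iff, coe_tent, coe_tent, unitInterval.coe_symm_eq, ← abs_neg]
  ring_nf

theorem tentc_eq_symm_tent (x : UI) : tentc x = unitInterval.symm (tent x) := by
  rw [Subtype.ext_iff, unitInterval.coe_symm_eq, coe_tent, coe_tentc, sub_sub_cancel]

/-- for the tent map `f₁ = tent` and `f₂ = 1 - tent` on `[0,1]`,
`F^n(x) = {f₁^n(x), f₂^n(x)}` and `f₁^n(x) + f₂^n(x) = 1` for all `x` and `n ≥ 1`. -/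
theorem stmt7 (x : UI) (n : ℕ) (hn : 1 ≤ n) :
    mIter tent tentc n x = {tent^[n] x, tentc^[n] x} ∧
    ((tent^[n] x : ℝ) + (tentc^[n] x : ℝ) = 1) := by
  obtain ⟨m, rfl⟩ := Nat.exists_eq_add_of_le' hn
  rw [iterate_succ_apply_eq_of_invariant tent_symm tentc_eq_symm_tent,
    mIter_succ_eq_pair tent_symm tentc_eq_symm_tent, unitInterval.coe_symm_eq]
  exact ⟨rfl, add_sub_cancel _ _⟩
end

section
/- Let X = {0} ∪ {1/n : n ∈ ℤ, n ≥ 1} ⊆ ℝ with the Euclidean metric, and define continuous maps f1, f2 : X → X by: f1(1) = 1/2, f1(1/2) = 1/3, f1(1/3) = 1, f1(1/n) = 1/(n+1) for n ≥ 4, f1(0) = 0; and f2(1) = 1/4, f2(1/4) = 1/5, f2(1/5) = 1, f2(1/3) = 1/6, f2(1/n) = 1/(n+1) for n ∈ {2} ∪ {6, 7, 8, …}, f2(0) = 0. Then 1 is a periodic point of both f1 and f2 (of period 3 for each), but 1 is NOT a periodic point of the multiple mapping F = {f1, f2}: the deleted orbit {F^n(1) : n ≥ 1} is infinite. -/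
open TopologicalSpace

/-- The space `{0} ∪ {1/n : n ≥ 1} ⊆ ℝ` (note `1/0 = 0` in `ℝ`, so this is
`{1/n : n ∈ ℕ}`). -/
abbrev InvNat : Type := {x : ℝ | ∃ n : ℕ, x = 1 / n}

/-- The point `1/n` of the space (`1/0 = 0`). -/
noncomputable def ipt (n : ℕ) : InvNat := ⟨1 / n, n, rfl⟩

/- Following `1 → 1/2 → 1/3 → 1/6` and then the shift `1/m ↦ 1/(m+1)` of `f₂` gives
`1/(n+3) ∈ F^n(1)` for `n ≥ 3`. On the other hand neither map raises the depth of a point (the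
number of steps needed to reach it from `1`) by more than one, so every point of `F^n(1)` has
depth at most `n`. Hence `F^(n+1)(1)` contains the point `1/(n+4)` of depth `n + 1`, which lies in
no earlier `F^k(1)`, and the sets `F^n(1)` are pairwise distinct. -/

open Function Set

lemma periodic_three_of_three_cycle {α : Type*} (f : α → α) {x y z : α} (hxy : f x = y)
    (hyz : f y = z) (hzx : f z = x) (hy : y ≠ x) (hz : z ≠ x) :
    f^[3] x = x ∧ ∀ k, 1 ≤ k → k < 3 → f^[k] x ≠ x := by
  refine ⟨by simp [hxy, hyz, hzx], fun k hk1 hk3 => ?_⟩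
  interval_cases k
  · simpa [hxy] using hy
  · simpa [hxy, hyz] using hz

lemma mIter_subset {X : Type*} {f₁ f₂ : X → X} {x : X} {S : ℕ → Set X} (h₀ : x ∈ S 0)
    (h₁ : ∀ n, MapsTo f₁ (S n) (S (n + 1))) (h₂ : ∀ n, MapsTo f₂ (S n) (S (n + 1))) (n : ℕ) :
    mIter f₁ f₂ n x ⊆ S n := by
  induction n with
  | zero => exact singleton_subset_iff.2 h₀
  | succ n ih =>
    exact union_subset ((image_mono ih).trans (h₁ n).image_subset)
      ((image_mono ih).trans (h₂ n).image_subset)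

lemma deletedOrbit_infinite {X : Type*} {f₁ f₂ : X → X} {x : X} {S : ℕ → Set X} (N : ℕ)
    (hS : Monotone S) (hsub : ∀ n, mIter f₁ f₂ n x ⊆ S n)
    (hnew : ∀ n, N ≤ n → ¬ mIter f₁ f₂ (n + 1) x ⊆ S n) :
    (deletedOrbit f₁ f₂ x).Infinite := by
  have hne : ∀ k l, k < l → mIter f₁ f₂ (k + N + 1) x ≠ mIter f₁ f₂ (l + N + 1) x := by
    intro k l hkl h
    exact hnew (l + N) (by omega) (h ▸ (hsub _).trans (hS (by omega)))
  refine infinite_of_injective_forall_mem (f := fun k => mIter f₁ f₂ (k + N + 1) x)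
    (fun k l h => ?_) (fun k => ⟨k + N + 1, by omega, rfl⟩)
  rcases lt_trichotomy k l with hkl | rfl | hlk
  exacts [absurd h (hne k l hkl), rfl, absurd h.symm (hne l k hlk)]

lemma ipt_injective : Injective ipt := fun n m h => by
  simpa [ipt] using congrArg Subtype.val h

/-- For `m ≥ 1`, the least `n` with `1/m ∈ F^n(1)`. -/
def depth (m : ℕ) : ℕ := if m = 2 then 1 else if m = 3 then 2 else m - 3

def depthLE (n : ℕ) : Set InvNat := ipt '' {m | 0 < m ∧ depth m ≤ n}

lemma depthLE_mono : Monotone depthLE :=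
  fun _ _ hnk => image_mono fun _ ⟨hm, hd⟩ => ⟨hm, hd.trans hnk⟩

lemma ipt_notMem_depthLE {m n : ℕ} (h : n < depth m) : ipt m ∉ depthLE n := by
  rintro ⟨m', ⟨-, hd⟩, he⟩
  rw [ipt_injective he] at hd
  omega

lemma mapsTo_depthLE {f : InvNat → InvNat}
    (hf : ∀ m, 0 < m → ∃ m', 0 < m' ∧ depth m' ≤ depth m + 1 ∧ f (ipt m) = ipt m') (n : ℕ) :
    MapsTo f (depthLE n) (depthLE (n + 1)) := by
  rintro _ ⟨m, ⟨hm, hd⟩, rfl⟩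
  obtain ⟨m', hm', hd', he⟩ := hf m hm
  exact ⟨m', ⟨hm', by omega⟩, he.symm⟩

lemma depth_of_four_le {m : ℕ} (h : 4 ≤ m) : depth m = m - 3 := by
  unfold depth
  split_ifs <;> omega

lemma depth_succ_le {m : ℕ} (h : 4 ≤ m) : depth (m + 1) ≤ depth m + 1 := by
  rw [depth_of_four_le h, depth_of_four_le (by omega)]
  omega

lemma mapsTo_depthLE_of_cycle_123 {f : InvNat → InvNat} (h1 : f (ipt 1) = ipt 2)
    (h2 : f (ipt 2) = ipt 3) (h3 : f (ipt 3) = ipt 1)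
    (hshift : ∀ m : ℕ, 4 ≤ m → f (ipt m) = ipt (m + 1)) (n : ℕ) :
    MapsTo f (depthLE n) (depthLE (n + 1)) := by
  refine mapsTo_depthLE (fun m hm => ?_) n
  rcases (by omega : m = 1 ∨ m = 2 ∨ m = 3 ∨ 4 ≤ m) with rfl | rfl | rfl | h4
  · exact ⟨2, by decide, by decide, h1⟩
  · exact ⟨3, by decide, by decide, h2⟩
  · exact ⟨1, by decide, by decide, h3⟩
  · exact ⟨m + 1, by omega, depth_succ_le h4, hshift m h4⟩

lemma mapsTo_depthLE_of_cycle_145 {f : InvNat → InvNat} (h1 : f (ipt 1) = ipt 4)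
    (h4 : f (ipt 4) = ipt 5) (h5 : f (ipt 5) = ipt 1) (h3 : f (ipt 3) = ipt 6)
    (h2 : f (ipt 2) = ipt 3) (hshift : ∀ m : ℕ, 6 ≤ m → f (ipt m) = ipt (m + 1)) (n : ℕ) :
    MapsTo f (depthLE n) (depthLE (n + 1)) := by
  refine mapsTo_depthLE (fun m hm => ?_) n
  rcases (by omega : m = 1 ∨ m = 2 ∨ m = 3 ∨ m = 4 ∨ m = 5 ∨ 6 ≤ m)
    with rfl | rfl | rfl | rfl | rfl | h6
  · exact ⟨4, by decide, by decide, h1⟩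
  · exact ⟨3, by decide, by decide, h2⟩
  · exact ⟨6, by decide, by decide, h3⟩
  · exact ⟨5, by decide, by decide, h4⟩
  · exact ⟨1, by decide, by decide, h5⟩
  · exact ⟨m + 1, by omega, depth_succ_le (by omega), hshift m h6⟩

lemma ipt_add_three_mem_mIter {f₁ f₂ : InvNat → InvNat} (h1a : f₁ (ipt 1) = ipt 2)
    (h2e : f₂ (ipt 2) = ipt 3) (h2d : f₂ (ipt 3) = ipt 6)
    (h2f : ∀ n : ℕ, 6 ≤ n → f₂ (ipt n) = ipt (n + 1)) {n : ℕ} (hn : 3 ≤ n) :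
    ipt (n + 3) ∈ mIter f₁ f₂ n (ipt 1) := by
  induction n, hn using Nat.le_induction with
  | base => exact Or.inr ⟨ipt 3, Or.inr ⟨ipt 2, Or.inl ⟨ipt 1, rfl, h1a⟩, h2e⟩, h2d⟩
  | succ n hn ih => exact Or.inr ⟨ipt (n + 3), ih, h2f (n + 3) (by omega)⟩

theorem stmt12_general (f₁ f₂ : InvNat → InvNat)
    (h1a : f₁ (ipt 1) = ipt 2) (h1b : f₁ (ipt 2) = ipt 3) (h1c : f₁ (ipt 3) = ipt 1)
    (h1d : ∀ n : ℕ, 4 ≤ n → f₁ (ipt n) = ipt (n + 1))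
    (h2a : f₂ (ipt 1) = ipt 4) (h2b : f₂ (ipt 4) = ipt 5) (h2c : f₂ (ipt 5) = ipt 1)
    (h2d : f₂ (ipt 3) = ipt 6) (h2e : f₂ (ipt 2) = ipt 3)
    (h2f : ∀ n : ℕ, 6 ≤ n → f₂ (ipt n) = ipt (n + 1)) :
    (f₁^[3] (ipt 1) = ipt 1 ∧ ∀ k, 1 ≤ k → k < 3 → f₁^[k] (ipt 1) ≠ ipt 1) ∧
    (f₂^[3] (ipt 1) = ipt 1 ∧ ∀ k, 1 ≤ k → k < 3 → f₂^[k] (ipt 1) ≠ ipt 1) ∧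
    ¬ MPeriodicPt f₁ f₂ (ipt 1) ∧
    (deletedOrbit f₁ f₂ (ipt 1)).Infinite := by
  have hsub : ∀ n, mIter f₁ f₂ n (ipt 1) ⊆ depthLE n :=
    mIter_subset ⟨1, ⟨one_pos, le_rfl⟩, rfl⟩ (mapsTo_depthLE_of_cycle_123 h1a h1b h1c h1d)
      (mapsTo_depthLE_of_cycle_145 h2a h2b h2c h2d h2e h2f)
  have hinf : (deletedOrbit f₁ f₂ (ipt 1)).Infinite := by
    refine deletedOrbit_infinite 2 depthLE_mono hsub fun n hn hle => ?_
    refine ipt_notMem_depthLE (m := n + 4) ?_ (hle (ipt_add_three_mem_mIter h1a h2e h2d h2f ?_))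
    · rw [depth_of_four_le (by omega)]
      omega
    · omega
  have hne : ∀ m, m ≠ 1 → ipt m ≠ ipt 1 := fun _ => ipt_injective.ne
  exact ⟨periodic_three_of_three_cycle f₁ h1a h1b h1c (hne 2 (by decide)) (hne 3 (by decide)),
    periodic_three_of_three_cycle f₂ h2a h2b h2c (hne 4 (by decide)) (hne 5 (by decide)),
    fun h => hinf h.1, hinf⟩

/-- on `X = {0} ∪ {1/n : n ≥ 1}`, with `f₁ : 1 → 1/2 → 1/3 → 1`,
`f₁(1/n) = 1/(n+1)` for `n ≥ 4`, and `f₂ : 1 → 1/4 → 1/5 → 1`, `f₂(1/3) = 1/6`,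
`f₂(1/n) = 1/(n+1)` for `n ∈ {2} ∪ {6,7,8,…}` (both fixing `0`), the point `1` is a
periodic point of period `3` of both `f₁` and `f₂`, but `1` is not a periodic point of
`F = {f₁, f₂}`: the deleted orbit `{F^n(1) : n ≥ 1}` is infinite. -/
theorem stmt12 (f₁ f₂ : InvNat → InvNat)
    (hf₁ : Continuous f₁) (hf₂ : Continuous f₂)
    (h1a : f₁ (ipt 1) = ipt 2) (h1b : f₁ (ipt 2) = ipt 3) (h1c : f₁ (ipt 3) = ipt 1)
    (h1d : ∀ n : ℕ, 4 ≤ n → f₁ (ipt n) = ipt (n + 1)) (h1e : f₁ (ipt 0) = ipt 0)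
    (h2a : f₂ (ipt 1) = ipt 4) (h2b : f₂ (ipt 4) = ipt 5) (h2c : f₂ (ipt 5) = ipt 1)
    (h2d : f₂ (ipt 3) = ipt 6) (h2e : f₂ (ipt 2) = ipt 3)
    (h2f : ∀ n : ℕ, 6 ≤ n → f₂ (ipt n) = ipt (n + 1)) (h2g : f₂ (ipt 0) = ipt 0) :
    (f₁^[3] (ipt 1) = ipt 1 ∧ ∀ k, 1 ≤ k → k < 3 → f₁^[k] (ipt 1) ≠ ipt 1) ∧
    (f₂^[3] (ipt 1) = ipt 1 ∧ ∀ k, 1 ≤ k → k < 3 → f₂^[k] (ipt 1) ≠ ipt 1) ∧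
    ¬ MPeriodicPt f₁ f₂ (ipt 1) ∧
    (deletedOrbit f₁ f₂ (ipt 1)).Infinite :=
  stmt12_general f₁ f₂ h1a h1b h1c h1d h2a h2b h2c h2d h2e h2f
end

section
/- On X = [0,1], let f1(x) = min(2x, 1), f2(x) = min(2 − 2x, 1), and let f be the tent map (f(x) = 2x for 0 ≤ x ≤ 1/2, f(x) = 2 − 2x for 1/2 < x ≤ 1). Then for every x ∈ [0,1] and every n ≥ 2, the multiple mapping F = {f1, f2} satisfies F^n(x) = {0, 1, f^n(x)}. -/
open TopologicalSpace

/-!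
Each `y` is sent by `f₁` and `f₂` to the pair `{f y, 1}`, where `f` is the tent map. Hence
`F^{n+1}(x) = f(F^n(x)) ∪ {1}`, and since `f 1 = 0` and `f 0 = 0`, after two steps the
orbit of the extra point `1` has settled into `{0, 1}`.
-/

section PairedMaps

variable {X : Type*} {f₁ f₂ g : X → X} {c : X}

lemma mIter_succ_eq_insert_image (hpair : ∀ y, ({f₁ y, f₂ y} : Set X) = {g y, c})
    (n : ℕ) (x : X) : mIter f₁ f₂ (n + 1) x = insert c (g '' mIter f₁ f₂ n x) := by
  obtain ⟨y₀, hy₀⟩ := mIter_nonempty f₁ f₂ n x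
  ext z
  calc z ∈ mIter f₁ f₂ (n + 1) x
      ↔ ∃ y ∈ mIter f₁ f₂ n x, z ∈ ({f₁ y, f₂ y} : Set X) := by
        simp only [mIter, Set.mem_union, Set.mem_image, Set.mem_insert_iff,
          Set.mem_singleton_iff, eq_comm (a := z)]
        aesop
    _ ↔ ∃ y ∈ mIter f₁ f₂ n x, z ∈ ({g y, c} : Set X) := by simp_rw [hpair]
    _ ↔ z ∈ insert c (g '' mIter f₁ f₂ n x) := by
        simp only [Set.mem_insert_iff, Set.mem_singleton_iff, Set.mem_image, eq_comm (a := z)]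
        aesop

lemma mIter_eq_of_pair_eq {d : X} (hpair : ∀ y, ({f₁ y, f₂ y} : Set X) = {g y, c})
    (hc : g c = d) (hd : g d = d) (x : X) {n : ℕ} (hn : 2 ≤ n) :
    mIter f₁ f₂ n x = {d, c, g^[n] x} := by
  induction n, hn using Nat.le_induction with
  | base =>
    rw [mIter_succ_eq_insert_image hpair, mIter_succ_eq_insert_image hpair]
    simp only [mIter, Set.image_singleton, Set.image_insert_eq, hc, Function.iterate_succ,
      Function.iterate_zero, Function.comp_apply, id, Set.insert_comm d c]
  | succ n _ ih =>
    rw [mIter_succ_eq_insert_image hpair, ih, Function.iterate_succ_apply']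
    simp only [Set.image_insert_eq, Set.image_singleton, hc, hd, Set.insert_eq_of_mem,
      Set.mem_insert_iff, true_or, Set.insert_comm d c]

end PairedMaps

lemma pair_mmap_eq_pair_tent (y : UI) :
    ({mmap₁ y, mmap₂ y} : Set UI) = {tent y, ⟨1, by norm_num⟩} := by
  by_cases hy : (y : ℝ) ≤ 1 / 2
  · have h₁ : mmap₁ y = tent y := Subtype.ext <| by
      simp only [mmap₁, tent, if_pos hy, min_eq_left (by linarith : 2 * (y : ℝ) ≤ 1)]
    have h₂ : mmap₂ y = ⟨1, by norm_num⟩ := Subtype.ext <| by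
      simp [mmap₂, min_eq_right (by linarith : (1 : ℝ) ≤ 2 - 2 * y)]
    rw [h₁, h₂]
  · have h₁ : mmap₁ y = ⟨1, by norm_num⟩ := Subtype.ext <| by
      simp [mmap₁, min_eq_right (by linarith : (1 : ℝ) ≤ 2 * y)]
    have h₂ : mmap₂ y = tent y := Subtype.ext <| by
      simp only [mmap₂, tent, if_neg hy, min_eq_left (by linarith : 2 - 2 * (y : ℝ) ≤ 1)]
    rw [h₁, h₂, Set.pair_comm]

lemma tent_one : tent ⟨1, by norm_num⟩ = ⟨0, by norm_num⟩ :=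
  Subtype.ext <| by norm_num [tent]

lemma tent_zero : tent ⟨0, by norm_num⟩ = ⟨0, by norm_num⟩ :=
  Subtype.ext <| by norm_num [tent]

/-- for `f₁ x = min (2x) 1`, `f₂ x = min (2-2x) 1` and the tent map `f`
on `[0,1]`, `F^n(x) = {0, 1, f^n(x)}` for every `x ∈ [0,1]` and every `n ≥ 2`. -/
theorem stmt14 (x : UI) (n : ℕ) (hn : 2 ≤ n) :
    mIter mmap₁ mmap₂ n x =
      ({⟨0, by norm_num⟩, ⟨1, by norm_num⟩, tent^[n] x} : Set UI) :=
  mIter_eq_of_pair_eq pair_mmap_eq_pair_tent tent_one tent_zero x hn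
end

section
/- Let X be the circle ℝ/ℤ with its quotient (arc-length) metric, and let f1, f2 : X → X be the continuous maps induced by x ↦ 2x and x ↦ 3x respectively. Then the multiple mapping F = {f1, f2} is Hausdorff metric sensitive: there exists δ > 0 such that every nonempty open set U ⊆ X contains points x, y with d_H(F^n(x), F^n(y)) > δ for some n ≥ 1. -/
open TopologicalSpace

/-!
Take `x = j / 2 ^ (k + 3)` with `j` within `8` of `2 ^ (k + 3) z`. A composition of `a` doublings
and `b` triplings sends `x` to `3 ^ b j / 2 ^ (k + 3 - a)`, so once `3 ^ n j` is congruent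
modulo `2 ^ (k + 3)` to the residue `lowResidue (k + 2)`, every point of `F^n(x)` lies on the half
circle `[0, 1/2]`. Such `j` and `n` exist because the powers of `3` reach every odd residue
modulo `2 ^ (k + 3)` that agrees with `j` modulo `8`. On the other hand `2 ^ n • y = 3/4` for some
`y` within `2 ^ (-n)` of `z`, and `3/4 ∈ F^n(y)` is at distance at least `1/4` from that half
circle, so `d_H(F^n(x), F^n(y)) ≥ 1/4`.
-/

open Set

lemma iterate_mem_mIter {X : Type*} (f g : X → X) (n : ℕ) (x : X) :
    f^[n] x ∈ mIter f g n x := by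
  induction n with
  | zero => exact rfl
  | succ n ih => exact Or.inl ⟨_, ih, (Function.iterate_succ_apply' f n x).symm⟩

lemma exists_eq_smul_of_mem_mIter_nsmul {M : Type*} [AddCommMonoid M] {c d n : ℕ} {x z : M}
    (hz : z ∈ mIter (c • ·) (d • ·) n x) :
    ∃ a b, a + b = n ∧ z = (c ^ a * d ^ b) • x := by
  induction n generalizing z with
  | zero => exact ⟨0, 0, rfl, by simpa [mIter] using hz⟩
  | succ n ih =>
    rcases hz with ⟨w, hw, rfl⟩ | ⟨w, hw, rfl⟩ <;> obtain ⟨a, b, rfl, rfl⟩ := ih hw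
    · exact ⟨a + 1, b, by ring, by simp only [smul_smul]; ring_nf⟩
    · exact ⟨a, b + 1, by ring, by simp only [smul_smul]; ring_nf⟩

lemma Metric.NonemptyCompacts.le_dist_of_mem {X : Type*} [MetricSpace X]
    {K L : NonemptyCompacts X} {y : X} {r : ℝ} (hy : y ∈ L) (h : ∀ z ∈ K, r ≤ dist y z) :
    r ≤ dist K L := by
  rw [Metric.NonemptyCompacts.dist_eq, Metric.hausdorffDist_comm]
  exact ((Metric.le_infDist K.nonempty).2 h).trans (Metric.infDist_le_hausdorffDist_of_mem hy
    (Metric.hausdorffEDist_ne_top_of_nonempty_of_bounded L.nonempty K.nonempty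
      L.isCompact.isBounded K.isCompact.isBounded))

namespace Int

lemma three_pow_two_pow_succ_eq (k : ℕ) :
    ∃ m : ℤ, Odd m ∧ (3 : ℤ) ^ 2 ^ (k + 1) = 1 + 2 ^ (k + 3) * m := by
  induction k with
  | zero => exact ⟨1, odd_one, by norm_num⟩
  | succ k ih =>
    obtain ⟨m, hm, h⟩ := ih
    refine ⟨m + 2 ^ (k + 2) * m ^ 2,
      hm.add_even ((even_two.pow_of_ne_zero (by omega)).mul_right _), ?_⟩
    rw [pow_succ 2 (k + 1), pow_mul, h]
    ring

lemma three_pow_two_pow_succ_modEq_one (k : ℕ) : 3 ^ 2 ^ (k + 1) ≡ 1 [ZMOD 2 ^ (k + 3)] := by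
  obtain ⟨m, -, h⟩ := three_pow_two_pow_succ_eq k
  exact modEq_iff_dvd.2 ⟨-m, by rw [h]; ring⟩

lemma exists_three_pow_mul_modEq {j w : ℤ} (hj : Odd j) (h8 : j ≡ w [ZMOD 8]) (k : ℕ) :
    ∃ n : ℕ, 3 ^ n * j ≡ w [ZMOD 2 ^ (k + 3)] := by
  induction k with
  | zero => exact ⟨0, by simpa using h8⟩
  | succ k ih =>
    obtain ⟨n, hn⟩ := ih
    obtain ⟨t, ht⟩ := Int.modEq_iff_dvd.1 hn
    rcases t.even_or_odd with ⟨u, rfl⟩ | ht_odd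
    · exact ⟨n, Int.modEq_iff_dvd.2 ⟨u, by rw [ht]; ring⟩⟩
    · -- `3 ^ 2 ^ (k + 1) = 1 + 2 ^ (k + 3) * odd` flips exactly the next binary digit.
      obtain ⟨m, hm, hpow⟩ := three_pow_two_pow_succ_eq k
      obtain ⟨u, hu⟩ := ht_odd.sub_odd (((by decide : Odd (3 : ℤ)).pow).mul hj |>.mul hm)
      refine ⟨n + 2 ^ (k + 1), Int.modEq_iff_dvd.2 ⟨u, ?_⟩⟩
      rw [pow_add, hpow]
      linear_combination ht + 2 ^ (k + 3) * hu

lemma exists_mem_Ico_forall_exists_three_pow_mul_modEq {w : ℤ} (hw : Odd w) (k : ℕ) (c : ℤ) :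
    ∃ j ∈ Ico c (c + 8), ∀ N : ℕ, ∃ n ≥ N, 3 ^ n * j ≡ w [ZMOD 2 ^ (k + 3)] := by
  have hw2 := Int.odd_iff.1 hw
  set j := c + (w - c) % 8
  have h8 : j ≡ w [ZMOD 8] := by simp only [Int.ModEq]; omega
  have hj : Odd j := Int.odd_iff.2 (by simp only [Int.ModEq] at h8; omega)
  refine ⟨j, ⟨by omega, by omega⟩, fun N => ?_⟩
  obtain ⟨n, hn⟩ := exists_three_pow_mul_modEq hj h8 k
  refine ⟨n + 2 ^ (k + 1) * N, le_add_left (Nat.le_mul_of_pos_left N (by positivity)), ?_⟩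
  calc 3 ^ (n + 2 ^ (k + 1) * N) * j = 3 ^ n * j * (3 ^ 2 ^ (k + 1)) ^ N := by ring
    _ ≡ w * 1 ^ N [ZMOD 2 ^ (k + 3)] := hn.mul ((three_pow_two_pow_succ_modEq_one k).pow N)
    _ = w := by ring

end Int

/-- The truncations `lowResidue k / 2 ^ (k + 1)` lie in `[0, 1/2]` and are compatible with
multiplication by `3`, so a single congruence for `3 ^ n j` controls every word of length `n`. -/
def lowResidue : ℕ → ℤ
  | 0 => 1
  | k + 1 => 3 * lowResidue k % 2 ^ (k + 1)

lemma odd_lowResidue : ∀ k, Odd (lowResidue k)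
  | 0 => odd_one
  | k + 1 => by
    rw [lowResidue, Int.emod_def]
    exact ((by decide : Odd (3 : ℤ)).mul (odd_lowResidue k)).sub_even
      ((even_two.pow_of_ne_zero k.succ_ne_zero).mul_right _)

lemma lowResidue_nonneg : ∀ k, 0 ≤ lowResidue k
  | 0 => zero_le_one
  | k + 1 => Int.emod_nonneg _ (by positivity)

lemma lowResidue_le_two_pow : ∀ k, lowResidue k ≤ 2 ^ k
  | 0 => le_rfl
  | k + 1 => (Int.emod_lt_of_pos _ (by positivity)).le

lemma lowResidue_add_modEq (k d : ℕ) :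
    lowResidue (k + d) ≡ 3 ^ d * lowResidue k [ZMOD 2 ^ (k + 1)] := by
  induction d with
  | zero => simp [Int.ModEq.refl]
  | succ d ih =>
    have hstep : lowResidue (k + d + 1) ≡ 3 * lowResidue (k + d) [ZMOD 2 ^ (k + 1)] :=
      (Int.mod_modEq _ _).of_dvd (pow_dvd_pow 2 (by omega))
    calc lowResidue (k + (d + 1)) ≡ 3 * lowResidue (k + d) [ZMOD 2 ^ (k + 1)] := hstep
      _ ≡ 3 * (3 ^ d * lowResidue k) [ZMOD 2 ^ (k + 1)] := ih.mul_left 3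
      _ = 3 ^ (d + 1) * lowResidue k := by ring

lemma modEq_lowResidue_of_three_pow_add_mul_modEq {a b k : ℕ} {j : ℤ}
    (h : 3 ^ (a + b) * j ≡ lowResidue (k + a) [ZMOD 2 ^ (k + a + 1)]) :
    3 ^ b * j ≡ lowResidue k [ZMOD 2 ^ (k + 1)] := by
  have h' : 3 ^ a * (3 ^ b * j) ≡ 3 ^ a * lowResidue k [ZMOD 2 ^ (k + 1)] := by
    rw [← mul_assoc, ← pow_add]
    exact (h.of_dvd (pow_dvd_pow 2 (by omega))).trans (lowResidue_add_modEq k a)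
  have hcop : IsCoprime ((2 : ℤ) ^ (k + 1)) (3 ^ a) :=
    IsCoprime.pow (Int.isCoprime_iff_gcd_eq_one.2 rfl)
  exact Int.modEq_iff_dvd.2 (hcop.dvd_of_dvd_mul_left (by
    rw [mul_sub]; exact Int.modEq_iff_dvd.1 h'))

namespace UnitAddCircle

lemma dist_coe_le (u v : ℝ) : dist (u : UnitAddCircle) v ≤ |u - v| := by
  rw [dist_eq_norm, ← AddCircle.coe_sub, ← Real.norm_eq_abs]
  exact QuotientAddGroup.norm_mk_le_norm

@[simp]
lemma coe_intCast (n : ℤ) : ((n : ℝ) : UnitAddCircle) = 0 :=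
  (AddCircle.coe_eq_zero_iff 1).2 ⟨n, by simp⟩

lemma coe_int_div_eq_of_modEq {a b q : ℤ} (h : a ≡ b [ZMOD q]) :
    ((a / q : ℝ) : UnitAddCircle) = (b / q : ℝ) := by
  obtain ⟨c, hc⟩ := Int.modEq_iff_dvd.1 h
  rcases eq_or_ne q 0 with rfl | hq
  · simp
  rw [eq_comm, ← sub_eq_zero, ← AddCircle.coe_sub, AddCircle.coe_eq_zero_iff]
  refine ⟨c, ?_⟩
  have hq' : (q : ℝ) ≠ 0 := by exact_mod_cast hq
  have hc' : (b : ℝ) - a = q * c := by exact_mod_cast hc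
  field_simp
  linear_combination -hc'

lemma le_norm_coe_of_mem_Icc {δ r : ℝ} (hδ : 0 ≤ δ) (hr : r ∈ Icc δ (1 - δ)) :
    δ ≤ ‖(r : UnitAddCircle)‖ := by
  obtain ⟨hδr, hr1⟩ := hr
  have hround : round r = 0 ∨ round r = 1 := by
    have h0 : 0 ≤ round r := by
      rw [round_eq]; exact Int.floor_nonneg.2 (by linarith)
    have h2 : round r < 2 := by
      rw [round_eq]; exact Int.floor_lt.2 (by push_cast; linarith)
    omega
  rw [UnitAddCircle.norm_eq]
  rcases hround with h | h <;> rw [h] <;> push_cast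
  · rwa [sub_zero, abs_of_nonneg (by linarith)]
  · rw [abs_sub_comm, abs_of_nonneg (by linarith)]; linarith

lemma exists_nsmul_eq_of_dist_le {m : ℕ} (hm : 0 < m) (z w : UnitAddCircle) :
    ∃ y : UnitAddCircle, dist y z ≤ 1 / m ∧ m • y = w := by
  induction z using QuotientAddGroup.induction_on with | H Z => ?_
  induction w using QuotientAddGroup.induction_on with | H W => ?_
  have hm' : (0 : ℝ) < m := by exact_mod_cast hm
  set l : ℤ := ⌈m * Z - W⌉
  refine ⟨((W + l) / m : ℝ), ?_, ?_⟩
  · have hl : m * Z - W ≤ l := Int.le_ceil _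
    have hl' : (l : ℝ) < m * Z - W + 1 := Int.ceil_lt_add_one _
    have e : (W + l) / m - Z = (W + l - m * Z) / m := by field_simp
    refine (dist_coe_le _ _).trans ?_
    rw [e, abs_div, abs_of_pos hm', div_le_div_iff_of_pos_right hm', abs_le]
    constructor <;> linarith
  · rw [← AddCircle.coe_nsmul, nsmul_eq_mul, mul_div_cancel₀ _ hm'.ne', AddCircle.coe_add,
      coe_intCast, add_zero]

end UnitAddCircle

lemma smul_coe_div_mem_image_Icc {s a b : ℕ} {j : ℤ}
    (h : 3 ^ (a + b) * j ≡ lowResidue s [ZMOD 2 ^ (s + 1)]) :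
    (2 ^ a * 3 ^ b) • ((j / 2 ^ (s + 1) : ℝ) : UnitAddCircle) ∈
      ((↑) : ℝ → UnitAddCircle) '' Icc 0 (1 / 2) := by
  rw [← AddCircle.coe_nsmul, nsmul_eq_mul]
  push_cast
  rcases le_or_gt a s with has | hsa
  · obtain ⟨k, rfl⟩ := Nat.exists_eq_add_of_le' has
    have hk := lowResidue_le_two_pow k
    refine ⟨lowResidue k / 2 ^ (k + 1), ⟨by positivity [lowResidue_nonneg k], ?_⟩, ?_⟩
    · rw [div_le_iff₀ (by positivity), pow_succ]
      have : (lowResidue k : ℝ) ≤ 2 ^ k := by exact_mod_cast hk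
      linarith
    · have e : (2 : ℝ) ^ a * 3 ^ b * (j / 2 ^ (k + a + 1)) =
          ((3 ^ b * j : ℤ) : ℝ) / ((2 ^ (k + 1) : ℤ) : ℝ) := by
        push_cast; rw [pow_add, pow_add]; field_simp; ring
      rw [e, UnitAddCircle.coe_int_div_eq_of_modEq (modEq_lowResidue_of_three_pow_add_mul_modEq h)]
      push_cast; rfl
  · obtain ⟨c, rfl⟩ := Nat.exists_eq_add_of_lt hsa
    refine ⟨0, ⟨le_rfl, by norm_num⟩, ?_⟩
    have e : (2 : ℝ) ^ (s + c + 1) * 3 ^ b * (j / 2 ^ (s + 1)) =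
        ((2 ^ c * 3 ^ b * j : ℤ) : ℝ) := by
      push_cast; rw [show s + c + 1 = c + (s + 1) by ring, pow_add]; field_simp
    rw [e, UnitAddCircle.coe_intCast, AddCircle.coe_zero]

lemma exists_dist_lt_mIter_subset_image_Icc (z : UnitAddCircle) {ε : ℝ} (hε : 0 < ε) :
    ∃ x, dist x z < ε ∧ ∃ n, 1 ≤ n ∧ 1 / 2 ^ n < ε ∧
      mIter (2 • ·) (3 • ·) n x ⊆ ((↑) : ℝ → UnitAddCircle) '' Icc 0 (1 / 2) := by
  induction z using QuotientAddGroup.induction_on with | H Z => ?_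
  obtain ⟨k, hk⟩ : ∃ k : ℕ, 1 / ε < 2 ^ k := pow_unbounded_of_one_lt _ one_lt_two
  obtain ⟨j, ⟨hj_lo, hj_hi⟩, hj⟩ := Int.exists_mem_Ico_forall_exists_three_pow_mul_modEq
    (odd_lowResidue (k + 2)) k ⌊2 ^ (k + 3) * Z⌋
  obtain ⟨n, hkn, hn⟩ := hj (k + 3)
  have hkε : 1 / 2 ^ k < ε := by
    rwa [div_lt_iff₀ (by positivity), mul_comm, ← div_lt_iff₀ hε]
  refine ⟨(j / 2 ^ (k + 3) : ℝ), ?_, n, by omega, ?_, ?_⟩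
  · have h_lo : 2 ^ (k + 3) * Z - 1 < j :=
      (Int.sub_one_lt_floor _).trans_le (by exact_mod_cast hj_lo)
    have h_hi : (j : ℝ) < 2 ^ (k + 3) * Z + 8 :=
      (Int.cast_lt.2 hj_hi).trans_le (by push_cast; linarith [Int.floor_le (2 ^ (k + 3) * Z)])
    have e : (j / 2 ^ (k + 3) : ℝ) - Z = (j - 2 ^ (k + 3) * Z) / 8 * (1 / 2 ^ k) := by
      field_simp; ring
    refine (UnitAddCircle.dist_coe_le _ _).trans_lt ?_
    rw [e, abs_mul, abs_of_pos (by positivity : (0 : ℝ) < 1 / 2 ^ k)]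
    refine (mul_le_of_le_one_left (by positivity) ?_).trans_lt hkε
    rw [abs_div, abs_of_pos (by norm_num : (0 : ℝ) < 8), div_le_one (by norm_num), abs_le]
    constructor <;> linarith
  · refine (one_div_le_one_div_of_le (by positivity) ?_).trans_lt hkε
    exact pow_le_pow_right₀ one_le_two (by omega)
  · rintro _ hz
    obtain ⟨a, b, rfl, rfl⟩ := exists_eq_smul_of_mem_mIter_nsmul hz
    exact smul_coe_div_mem_image_Icc hn

/-- on the circle `ℝ/ℤ` with its quotient (arc-length) metric, the
multiple mapping `F = {x ↦ 2x, x ↦ 3x}` is Hausdorff metric sensitive. -/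
theorem stmt17 :
    MSensitive (fun x : AddCircle (1 : ℝ) => 2 • x)
      (fun x : AddCircle (1 : ℝ) => 3 • x) := by
  refine ⟨1 / 5, by norm_num, fun U hU ⟨z, hz⟩ => ?_⟩
  obtain ⟨ε, hε, hball⟩ := Metric.isOpen_iff.1 hU z hz
  obtain ⟨x, hxz, n, hn, hnε, hx⟩ := exists_dist_lt_mIter_subset_image_Icc z hε
  obtain ⟨y, hyz, hy⟩ :=
    UnitAddCircle.exists_nsmul_eq_of_dist_le (pow_pos two_pos n) z (3 / 4 : ℝ)
  refine ⟨x, hball hxz, y, hball (hyz.trans_lt (by exact_mod_cast hnε)), n, hn, ?_⟩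
  have hmem : ((3 / 4 : ℝ) : UnitAddCircle) ∈ mIter (2 • ·) (3 • ·) n y := by
    rw [← hy, ← smul_iterate_apply]
    exact iterate_mem_mIter _ _ n y
  have hfar :
      1 / 4 ≤ dist (mIterNC (2 • ·) (3 • ·) n x) (mIterNC (2 • ·) (3 • ·) n y) := by
    refine Metric.NonemptyCompacts.le_dist_of_mem hmem fun _ hw => ?_
    obtain ⟨t, ⟨ht0, ht1⟩, rfl⟩ := hx hw
    rw [dist_eq_norm, ← AddCircle.coe_sub]
    exact UnitAddCircle.le_norm_coe_of_mem_Icc (by norm_num) ⟨by linarith, by linarith⟩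
  linarith
end
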